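/- Let G be a discrete group and p ∈ (1,∞). Then G is amenable if and only if for every finite subset E ⊆ G, ‖Σ_{t∈E} λ_p(t)‖ = |E| (operator norm on ℓ^p(G)). -/

import Mathlib

open scoped ENNReal ComplexOrder
open Filter Topology

/-- `lam` is the left regular representation: `lam s` sends `δ_t` to `δ_{s t}`. -/
def IsLeftReg {G : Type*} [Group G] [DecidableEq G] {p : ℝ≥0∞} [Fact (1 ≤ p)]
    (lam : G → (lp (fun _ : G => ℂ) p →L[ℂ] lp (fun _ : G => ℂ) p)) : Prop :=
  ∀ s t : G, lam s (lp.single (E := fun _ : G => ℂ) p t 1) =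
    lp.single (E := fun _ : G => ℂ) p (s * t) 1

/-- `rho` is the right regular representation: `rho s` sends `δ_t` to `δ_{t s⁻¹}`. -/
def IsRightReg {G : Type*} [Group G] [DecidableEq G] {p : ℝ≥0∞} [Fact (1 ≤ p)]
    (rho : G → (lp (fun _ : G => ℂ) p →L[ℂ] lp (fun _ : G => ℂ) p)) : Prop :=
  ∀ s t : G, rho s (lp.single (E := fun _ : G => ℂ) p t 1) =
    lp.single (E := fun _ : G => ℂ) p (t * s⁻¹) 1

/-- Extension of a representation to finitely supported functions: `opOf lam f = Σ_s f(s) • lam s`. -/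
noncomputable def opOf {G : Type*} [Group G] {p : ℝ≥0∞} [Fact (1 ≤ p)]
    (lam : G → (lp (fun _ : G => ℂ) p →L[ℂ] lp (fun _ : G => ℂ) p)) (f : G →₀ ℂ) :
    lp (fun _ : G => ℂ) p →L[ℂ] lp (fun _ : G => ℂ) p :=
  f.sum fun s c => c • lam s

/-- A vector in `ℓ^p(G)` is nonnegative if all its coordinates are nonnegative reals. -/
def IsNonneg {G : Type*} {p : ℝ≥0∞} [Fact (1 ≤ p)] (ξ : lp (fun _ : G => ℂ) p) : Prop :=
  ∀ t : G, 0 ≤ ξ t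

/-!
Almost invariant unit vectors `f` give `‖∑_{t ∈ E} λ(t) f‖ ≈ |E|`, hence `‖∑_{t ∈ E} λ(t)‖ = |E|`.

Conversely, if `‖∑_{t ∈ E} λ(t)‖ = |E|` for all `E`, take a unit vector `f` with
`‖∑_{t ∈ E ∪ {1}} λ(t) f‖ ≈ |E ∪ {1}|`; replacing `f` by `|f|` only increases this norm. All terms
have norm one, so `‖λ(s) f + f‖ ≈ 2` for every `s ∈ E`. The nonnegative part of the unit sphere of
`ℓ^p` is uniformly convex, hence `λ(s) f ≈ f`. This uniform convexity comes from summing the scalar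
estimate `|a - b|^p ≤ ε (a^p + b^p) + K_ε (2^(p-1) (a^p + b^p) - (a + b)^p)` for `a, b ≥ 0`, which
follows from the strict convexity of `t ↦ t^p` by compactness.
-/

open scoped NNReal

section RealInequalities

variable {q : ℝ}

theorem rpow_add_le_two_rpow_sub_one_mul (hq : 1 ≤ q) {a b : ℝ} (ha : 0 ≤ a) (hb : 0 ≤ b) :
    (a + b) ^ q ≤ 2 ^ (q - 1) * (a ^ q + b ^ q) := by
  lift a to ℝ≥0 using ha
  lift b to ℝ≥0 using hb
  exact_mod_cast NNReal.rpow_add_le_mul_rpow_add_rpow a b hq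

theorem rpow_add_lt_two_rpow_sub_one_mul (hq : 1 < q) {a b : ℝ} (ha : 0 ≤ a) (hb : 0 ≤ b)
    (hab : a ≠ b) : (a + b) ^ q < 2 ^ (q - 1) * (a ^ q + b ^ q) := by
  have h := (strictConvexOn_rpow hq).2 ha hb hab (by norm_num : (0 : ℝ) < 1 / 2)
    (by norm_num : (0 : ℝ) < 1 / 2) (by norm_num)
  simp only [smul_eq_mul, ← mul_add] at h
  rw [Real.mul_rpow (by norm_num) (by positivity), Real.div_rpow zero_le_one zero_le_two,
    Real.one_rpow] at h
  rw [Real.rpow_sub_one two_ne_zero]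
  have h2 : (0 : ℝ) < 2 ^ q := by positivity
  rw [one_div_mul_eq_div, div_lt_iff₀ h2] at h
  exact h.trans_eq (by ring)

theorem exists_one_sub_rpow_le (hq : 1 < q) {ε : ℝ} (hε : 0 < ε) :
    ∃ K, ∀ t ∈ Set.Icc (0 : ℝ) 1,
      (1 - t) ^ q ≤ ε * (1 + t ^ q) + K * (2 ^ (q - 1) * (1 + t ^ q) - (1 + t) ^ q) := by
  set d : ℝ → ℝ := fun t => 2 ^ (q - 1) * (1 + t ^ q) - (1 + t) ^ q
  have hq0 : 0 < q := zero_lt_one.trans hq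
  have hcont : Continuous fun t : ℝ => (1 - t) ^ q :=
    (continuous_const.sub continuous_id).rpow_const fun _ => Or.inr hq0.le
  have hC : IsCompact {t ∈ Set.Icc (0 : ℝ) 1 | ε ≤ (1 - t) ^ q} :=
    isCompact_Icc.inter_right (isClosed_le continuous_const hcont)
  have hd : ContinuousOn d {t ∈ Set.Icc (0 : ℝ) 1 | ε ≤ (1 - t) ^ q} := by
    refine (continuous_const.mul (continuous_const.add ?_)).sub ?_ |>.continuousOn
    · exact continuous_id.rpow_const fun _ => Or.inr hq0.le
    · exact (continuous_const.add continuous_id).rpow_const fun _ => Or.inr hq0.le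
  -- `d` is positive away from `t = 1` by strict convexity, hence bounded below on the compact set
  -- where `(1 - t) ^ q` is not already small.
  obtain ⟨κ, hκ, hκd⟩ := hC.exists_forall_le' hd fun t ⟨⟨ht0, _⟩, htε⟩ => by
    have ht1 : (1 : ℝ) ≠ t := by
      rintro rfl
      rw [sub_self, Real.zero_rpow hq0.ne'] at htε
      exact not_lt.2 htε hε
    exact sub_pos.2 (by simpa using rpow_add_lt_two_rpow_sub_one_mul hq zero_le_one ht0 ht1)
  refine ⟨κ⁻¹, fun t ⟨ht0, ht1⟩ => ?_⟩
  have hd0 : 0 ≤ d t :=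
    sub_nonneg.2 (by simpa using rpow_add_le_two_rpow_sub_one_mul hq.le zero_le_one ht0)
  have hεt : ε ≤ ε * (1 + t ^ q) := le_mul_of_one_le_right hε.le (by simp [Real.rpow_nonneg ht0])
  by_cases hsmall : (1 - t) ^ q < ε
  · have := mul_nonneg (inv_nonneg.2 hκ.le) hd0
    linarith
  · have h1 : (1 - t) ^ q ≤ 1 := Real.rpow_le_one (by linarith) (by linarith) hq0.le
    have h2 : 1 ≤ κ⁻¹ * d t := by
      rw [← div_eq_inv_mul, one_le_div hκ]
      exact hκd t ⟨⟨ht0, ht1⟩, not_lt.1 hsmall⟩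
    have := mul_nonneg hε.le (by positivity : (0 : ℝ) ≤ 1 + t ^ q)
    linarith

theorem exists_abs_sub_rpow_le (hq : 1 < q) {ε : ℝ} (hε : 0 < ε) :
    ∃ K, ∀ a b : ℝ, 0 ≤ a → 0 ≤ b →
      |a - b| ^ q ≤ ε * (a ^ q + b ^ q) + K * (2 ^ (q - 1) * (a ^ q + b ^ q) - (a + b) ^ q) := by
  obtain ⟨K, hK⟩ := exists_one_sub_rpow_le hq hε
  refine ⟨K, fun a b ha hb => ?_⟩
  wlog hba : b ≤ a generalizing a b
  · simpa only [abs_sub_comm, add_comm] using this b a hb ha (le_of_not_ge hba)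
  -- by homogeneity we may take `a = 1` and `b = t ∈ [0, 1]`
  obtain ⟨t, ht, rfl⟩ : ∃ t ∈ Set.Icc (0 : ℝ) 1, b = a * t := by
    rcases ha.eq_or_lt with rfl | ha
    · exact ⟨0, Set.left_mem_Icc.2 zero_le_one, by linarith [hb.antisymm hba]⟩
    · exact ⟨b / a, ⟨div_nonneg hb ha.le, div_le_one_of_le₀ hba ha.le⟩, by field_simp⟩
  have e1 : |a - a * t| ^ q = a ^ q * (1 - t) ^ q := by
    rw [abs_of_nonneg (by nlinarith [ht.2]), ← mul_one_sub, Real.mul_rpow ha (by linarith [ht.2])]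
  have e2 : (a * t) ^ q = a ^ q * t ^ q := Real.mul_rpow ha ht.1
  have e3 : (a + a * t) ^ q = a ^ q * (1 + t) ^ q := by
    rw [← mul_one_add, Real.mul_rpow ha (by linarith [ht.1])]
  rw [e1, e2, e3]
  have := mul_le_mul_of_nonneg_left (hK t ht) (Real.rpow_nonneg ha q)
  linarith

end RealInequalities

theorem Complex.norm_add_of_nonneg {z w : ℂ} (hz : 0 ≤ z) (hw : 0 ≤ w) :
    ‖z + w‖ = ‖z‖ + ‖w‖ := by
  rw [Complex.eq_coe_norm_of_nonneg hz, Complex.eq_coe_norm_of_nonneg hw, ← Complex.ofReal_add]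
  simp only [Complex.norm_real, Real.norm_eq_abs, abs_norm]
  exact abs_of_nonneg (by positivity)

theorem Complex.norm_sub_of_nonneg {z w : ℂ} (hz : 0 ≤ z) (hw : 0 ≤ w) :
    ‖z - w‖ = |‖z‖ - ‖w‖| := by
  rw [Complex.eq_coe_norm_of_nonneg hz, Complex.eq_coe_norm_of_nonneg hw, ← Complex.ofReal_sub]
  simp only [Complex.norm_real, Real.norm_eq_abs, abs_norm]

section NonnegLp

variable {α : Type*} {p : ℝ≥0∞} [Fact (1 ≤ p)]

theorem exists_norm_sub_rpow_le_of_isNonneg (hp : 1 < p.toReal) {ε : ℝ} (hε : 0 < ε) :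
    ∃ K, ∀ u v : lp (fun _ : α => ℂ) p, IsNonneg u → IsNonneg v →
      ‖u - v‖ ^ p.toReal ≤ ε * (‖u‖ ^ p.toReal + ‖v‖ ^ p.toReal) +
        K * (2 ^ (p.toReal - 1) * (‖u‖ ^ p.toReal + ‖v‖ ^ p.toReal) - ‖u + v‖ ^ p.toReal) := by
  obtain ⟨K, hK⟩ := exists_abs_sub_rpow_le hp hε
  refine ⟨K, fun u v hu hv => ?_⟩
  have hp0 : 0 < p.toReal := zero_lt_one.trans hp
  have hsum := (((lp.hasSum_norm hp0 u).add (lp.hasSum_norm hp0 v)).mul_left ε).add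
    ((((lp.hasSum_norm hp0 u).add (lp.hasSum_norm hp0 v)).mul_left (2 ^ (p.toReal - 1))).sub
      (lp.hasSum_norm hp0 (u + v)) |>.mul_left K)
  refine hasSum_le (fun x => ?_) (lp.hasSum_norm hp0 (u - v)) hsum
  simp only [lp.coeFn_add, lp.coeFn_sub, Pi.add_apply, Pi.sub_apply,
    Complex.norm_add_of_nonneg (hu x) (hv x), Complex.norm_sub_of_nonneg (hu x) (hv x)]
  exact hK _ _ (norm_nonneg _) (norm_nonneg _)

theorem tendsto_norm_sub_of_isNonneg {ι : Type*} {l : Filter ι} (hp : 1 < p.toReal)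
    {u v : ι → lp (fun _ : α => ℂ) p} (hu : ∀ i, IsNonneg (u i)) (hv : ∀ i, IsNonneg (v i))
    (hu1 : ∀ i, ‖u i‖ = 1) (hv1 : ∀ i, ‖v i‖ = 1)
    (h : Tendsto (fun i => ‖u i + v i‖) l (𝓝 2)) :
    Tendsto (fun i => ‖u i - v i‖) l (𝓝 0) := by
  set q := p.toReal
  have hq0 : 0 < q := zero_lt_one.trans hp
  have hdefect : Tendsto (fun i => 2 ^ q - ‖u i + v i‖ ^ q) l (𝓝 0) := by
    simpa using (tendsto_const_nhds (x := (2 : ℝ) ^ q)).sub (h.rpow_const (Or.inr hq0.le))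
  have hpow : Tendsto (fun i => ‖u i - v i‖ ^ q) l (𝓝 0) := by
    refine tendsto_order.2 ⟨fun η hη => Eventually.of_forall fun i => hη.trans_le (by positivity),
      fun η hη => ?_⟩
    obtain ⟨K, hK⟩ := exists_norm_sub_rpow_le_of_isNonneg (α := α) hp (by positivity : 0 < η / 4)
    have hsmall : ∀ᶠ i in l, K * (2 ^ q - ‖u i + v i‖ ^ q) < η / 2 :=
      (hdefect.const_mul K).eventually (gt_mem_nhds (by simpa using half_pos hη))
    filter_upwards [hsmall] with i hi
    have h2q : (2 : ℝ) ^ (q - 1) * (1 + 1) = 2 ^ q := by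
      rw [Real.rpow_sub_one two_ne_zero]; ring
    have := hK (u i) (v i) (hu i) (hv i)
    rw [hu1, hv1, Real.one_rpow, h2q] at this
    linarith
  simpa [← Real.rpow_mul (norm_nonneg _), mul_inv_cancel₀ hq0.ne',
    Real.zero_rpow (inv_ne_zero hq0.ne')]
    using hpow.rpow_const (p := q⁻¹) (Or.inr (inv_nonneg.2 hq0.le))

end NonnegLp

section NormedSpace

variable {α 𝕜 E : Type*} [RCLike 𝕜] [NormedAddCommGroup E] [NormedSpace 𝕜 E]

theorem card_le_norm_sum_of_tendsto {ι : Type*} {l : Filter ι} [l.NeBot] {T : α → E →L[𝕜] E}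
    {f : ι → E} (hf : ∀ i, ‖f i‖ = 1) (hT : ∀ s, Tendsto (fun i => ‖T s (f i) - f i‖) l (𝓝 0))
    (A : Finset α) : (A.card : ℝ) ≤ ‖∑ t ∈ A, T t‖ := by
  have hbound : ∀ i, (A.card : ℝ) ≤ ‖∑ t ∈ A, T t‖ + ∑ t ∈ A, ‖T t (f i) - f i‖ := fun i =>
    calc (A.card : ℝ) = ‖(A.card : 𝕜) • f i‖ := by rw [norm_smul, hf, mul_one, RCLike.norm_natCast]
      _ = ‖(∑ t ∈ A, T t) (f i) - ∑ t ∈ A, (T t (f i) - f i)‖ := by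
        rw [sum_apply, Finset.sum_sub_distrib, sub_sub_cancel, Finset.sum_const,
          Nat.cast_smul_eq_nsmul]
      _ ≤ ‖(∑ t ∈ A, T t) (f i)‖ + ‖∑ t ∈ A, (T t (f i) - f i)‖ := norm_sub_le _ _
      _ ≤ ‖∑ t ∈ A, T t‖ + ∑ t ∈ A, ‖T t (f i) - f i‖ := by
        gcongr
        · simpa [hf] using (∑ t ∈ A, T t).le_opNorm (f i)
        · exact norm_sum_le _ _
  refine ge_of_tendsto (x := l) ?_ (Eventually.of_forall hbound)
  simpa using tendsto_const_nhds.add (tendsto_finsetSum A fun s _ => hT s)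

theorem norm_sum_le_card_sdiff_add_norm_sum [DecidableEq α] {x : α → E} {A B : Finset α}
    (hAB : A ⊆ B) (hx : ∀ t, ‖x t‖ ≤ 1) :
    ‖∑ t ∈ B, x t‖ ≤ (B.card - A.card : ℝ) + ‖∑ t ∈ A, x t‖ := by
  rw [← Finset.sum_sdiff hAB]
  refine (norm_add_le _ _).trans (add_le_add_left ?_ _)
  calc ‖∑ t ∈ B \ A, x t‖ ≤ ∑ t ∈ B \ A, 1 := norm_sum_le_of_le _ fun t _ => hx t
    _ = B.card - A.card := by
      rw [Finset.sum_const, nsmul_one, Finset.card_sdiff_of_subset hAB,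
        Nat.cast_sub (Finset.card_le_card hAB)]

end NormedSpace

section LpAbs

variable {α : Type*} {p : ℝ≥0∞}

noncomputable def lpAbs (f : lp (fun _ : α => ℂ) p) : lp (fun _ : α => ℂ) p :=
  ⟨fun x => (‖f x‖ : ℂ), Memℓp.of_norm (by simpa using (lp.memℓp f).norm)⟩

@[simp] theorem lpAbs_apply (f : lp (fun _ : α => ℂ) p) (x : α) : lpAbs f x = (‖f x‖ : ℂ) := rfl

theorem isNonneg_lpAbs [Fact (1 ≤ p)] (f : lp (fun _ : α => ℂ) p) : IsNonneg (lpAbs f) :=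
  fun x => by simp [Complex.zero_le_real]

theorem norm_lpAbs [Fact (1 ≤ p)] (f : lp (fun _ : α => ℂ) p) : ‖lpAbs f‖ = ‖f‖ := by
  have hp : p ≠ 0 := (zero_lt_one.trans_le Fact.out).ne'
  exact le_antisymm (lp.norm_mono hp fun x => by simp) (lp.norm_mono hp fun x => by simp)

end LpAbs

namespace IsLeftReg

variable {G : Type*} [Group G] [DecidableEq G] {p : ℝ≥0∞} [Fact (1 ≤ p)]
  {lam : G → (lp (fun _ : G => ℂ) p →L[ℂ] lp (fun _ : G => ℂ) p)}

variable (hlam : IsLeftReg lam) (hp : p ≠ ⊤)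
include hlam hp

theorem apply_apply (s : G) (f : lp (fun _ : G => ℂ) p) (x : G) : lam s f x = f (s⁻¹ * x) := by
  have h : (lp.evalCLM ℂ (fun _ : G => ℂ) p x).comp (lam s) = lp.evalCLM ℂ _ p (s⁻¹ * x) :=
    lp.ext_continuousLinearMap hp fun t => ContinuousLinearMap.ext_ring <| by
      simp [lp.evalCLM, hlam s t, lp.single_apply, Pi.single_apply, inv_mul_eq_iff_eq_mul]
  exact DFunLike.congr_fun h f

theorem one_apply (f : lp (fun _ : G => ℂ) p) : lam 1 f = f :=
  lp.ext <| funext fun x => by rw [hlam.apply_apply hp, inv_one, one_mul]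

theorem isNonneg_apply (s : G) {f : lp (fun _ : G => ℂ) p} (hf : IsNonneg f) :
    IsNonneg (lam s f) := fun x => by
  rw [hlam.apply_apply hp]
  exact hf _

theorem norm_apply (s : G) (f : lp (fun _ : G => ℂ) p) : ‖lam s f‖ = ‖f‖ := by
  have hp0 : 0 < p.toReal := ENNReal.toReal_pos (zero_lt_one.trans_le Fact.out).ne' hp
  simp only [lp.norm_eq_tsum_rpow hp0, hlam.apply_apply hp]
  exact congrArg (· ^ (1 / p.toReal)) ((Equiv.mulLeft s⁻¹).tsum_eq fun x => ‖f x‖ ^ p.toReal)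

theorem norm_sum_le_card (E : Finset G) : ‖∑ t ∈ E, lam t‖ ≤ E.card := by
  calc ‖∑ t ∈ E, lam t‖ ≤ ∑ t ∈ E, 1 := norm_sum_le_of_le _ fun t _ =>
        (lam t).opNorm_le_bound zero_le_one fun f => by rw [hlam.norm_apply hp, one_mul]
    _ = E.card := by simp

theorem norm_sum_apply_le_norm_sum_apply_lpAbs (E : Finset G) (f : lp (fun _ : G => ℂ) p) :
    ‖(∑ t ∈ E, lam t) f‖ ≤ ‖(∑ t ∈ E, lam t) (lpAbs f)‖ := by
  have hsum (g : lp (fun _ : G => ℂ) p) (x : G) : (∑ t ∈ E, lam t) g x = ∑ t ∈ E, g (t⁻¹ * x) := by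
    simp only [sum_apply, lp.coeFn_sum, Finset.sum_apply, hlam.apply_apply hp]
  refine lp.norm_mono (zero_lt_one.trans_le Fact.out).ne' fun x => ?_
  rw [hsum, hsum]
  simp only [lpAbs_apply, ← Complex.ofReal_sum, Complex.norm_real, Real.norm_eq_abs]
  exact (norm_sum_le _ _).trans (le_abs_self _)

theorem exists_isNonneg_lt_norm_sum_apply {E : Finset G} (hE : E.Nonempty)
    (hnorm : ‖∑ t ∈ E, lam t‖ = E.card) {δ : ℝ} (hδ : 0 < δ) :
    ∃ f : lp (fun _ : G => ℂ) p, IsNonneg f ∧ ‖f‖ = 1 ∧ E.card - δ < ‖(∑ t ∈ E, lam t) f‖ := by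
  have hlt : (E.card - δ).toNNReal < ‖∑ t ∈ E, lam t‖₊ := by
    rw [← NNReal.coe_lt_coe, coe_nnnorm, hnorm, Real.coe_toNNReal', max_lt_iff]
    exact ⟨by linarith, by exact_mod_cast hE.card_pos⟩
  obtain ⟨g, hg, hSg⟩ :=
    (∑ t ∈ E, lam t).exists_nnnorm_eq_one_lt_apply_of_lt_opNNNorm hlt
  refine ⟨lpAbs g, isNonneg_lpAbs g, by rw [norm_lpAbs, ← coe_nnnorm, hg, NNReal.coe_one], ?_⟩
  refine lt_of_lt_of_le ?_ (hlam.norm_sum_apply_le_norm_sum_apply_lpAbs hp E g)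
  rw [← NNReal.coe_lt_coe, coe_nnnorm] at hSg
  exact (Real.le_coe_toNNReal _).trans_lt hSg

theorem two_sub_lt_norm_apply_add {E : Finset G} {s : G} (h1 : 1 ∈ E) (hs : s ∈ E)
    {f : lp (fun _ : G => ℂ) p} (hf : ‖f‖ = 1) {δ : ℝ} (hδ : 0 < δ)
    (hSf : E.card - δ < ‖(∑ t ∈ E, lam t) f‖) : 2 - δ < ‖lam s f + f‖ := by
  rcases eq_or_ne s 1 with rfl | hs1
  · rw [hlam.one_apply hp, ← two_smul ℂ, norm_smul, hf]
    norm_num [hδ]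
  have hsub : {s, 1} ⊆ E := Finset.insert_subset hs (Finset.singleton_subset_iff.2 h1)
  have := norm_sum_le_card_sdiff_add_norm_sum hsub fun t => (hlam.norm_apply hp t f).trans_le hf.le
  rw [Finset.sum_pair hs1, hlam.one_apply hp, Finset.card_pair hs1] at this
  rw [sum_apply] at hSf
  push_cast at this
  linarith

end IsLeftReg

theorem stmt7 {G : Type u} [Group G] [DecidableEq G] {p : ℝ≥0∞} [Fact (1 ≤ p)]
    (hp : 1 < p) (hp' : p ≠ ⊤)
    (lam : G → (lp (fun _ : G => ℂ) p →L[ℂ] lp (fun _ : G => ℂ) p))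
    (hlam : IsLeftReg lam) :
    (∃ (ι : Type u) (l : Filter ι) (fα : ι → lp (fun _ : G => ℂ) p), l.NeBot ∧
      (∀ α, IsNonneg (fα α) ∧ ‖fα α‖ = 1) ∧
      ∀ s : G, Tendsto (fun α => ‖lam s (fα α) - fα α‖) l (𝓝 0)) ↔
    ∀ E : Finset G, ‖∑ t ∈ E, lam t‖ = (E.card : ℝ) := by
  constructor
  · rintro ⟨ι, l, f, hl, hf, hinv⟩ E
    exact (hlam.norm_sum_le_card hp' E).antisymm
      (card_le_norm_sum_of_tendsto (fun i => (hf i).2) hinv E)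
  · intro hnorm
    have hq : 1 < p.toReal := by simpa using ENNReal.toReal_strict_mono hp' hp
    choose f hf using fun k : Finset G × ℕ =>
      hlam.exists_isNonneg_lt_norm_sum_apply hp' (Finset.insert_nonempty 1 k.1)
        (hnorm (insert 1 k.1)) (Nat.one_div_pos_of_nat (n := k.2))
    refine ⟨Finset G × ℕ, atTop, f, atTop_neBot, fun k => ⟨(hf k).1, (hf k).2.1⟩, fun s => ?_⟩
    have hδ : Tendsto (fun k : Finset G × ℕ => 2 - 1 / ((k.2 : ℝ) + 1)) atTop (𝓝 2) := by
      simpa using (tendsto_const_nhds (x := (2 : ℝ))).sub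
        (tendsto_one_div_add_atTop_nhds_zero_nat.comp
          (tendsto_snd.mono_left (prod_atTop_atTop_eq (α := Finset G) (β := ℕ)).ge))
    have hadd : Tendsto (fun k => ‖lam s (f k) + f k‖) atTop (𝓝 2) := by
      refine tendsto_of_tendsto_of_tendsto_of_le_of_le' hδ tendsto_const_nhds ?_ ?_
      · filter_upwards [eventually_ge_atTop ({s}, 0)] with k hk
        exact (hlam.two_sub_lt_norm_apply_add hp' (Finset.mem_insert_self 1 k.1)
          (Finset.mem_insert_of_mem (hk.1 (Finset.mem_singleton_self s))) (hf k).2.1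
          Nat.one_div_pos_of_nat (hf k).2.2).le
      · refine Eventually.of_forall fun k => (norm_add_le _ _).trans ?_
        rw [hlam.norm_apply hp', (hf k).2.1]
        norm_num
    exact tendsto_norm_sub_of_isNonneg hq (fun k => hlam.isNonneg_apply hp' s (hf k).1)
      (fun k => (hf k).1) (fun k => by rw [hlam.norm_apply hp', (hf k).2.1]) (fun k => (hf k).2.1)
      hadd
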